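/- Let G be a graph with girth g > 6 and minimum degree δ large enough that (δ−1)^(⌊(g−1)/2⌋−1)/(12(g+1)) ≥ δ + (δ−2)(g−3). Then Z(G) ≥ δ + (δ−2)(g−3). -/

import Mathlib

/-- The set of vertices eventually colored by the zero forcing process started from `S`:
a vertex is forced if it is initially colored, or if some colored neighbor `v` has all its
other neighbors colored. -/
inductive SimpleGraph.Forced {V : Type*} (G : SimpleGraph V) (S : Set V) : V → Prop
  | init {v : V} : v ∈ S → G.Forced S v
  | force {v w : V} : G.Adj v w → G.Forced S v →
      (∀ u, G.Adj v u → u ≠ w → G.Forced S u) → G.Forced S w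

/-- `S` is a zero forcing set of `G` if the process colors every vertex. -/
def SimpleGraph.IsZeroForcingSet {V : Type*} (G : SimpleGraph V) (S : Set V) : Prop :=
  ∀ v, G.Forced S v

/-- The zero forcing number `Z(G)`: minimum size of a zero forcing set. -/
noncomputable def SimpleGraph.zeroForcingNumber {V : Type*} (G : SimpleGraph V) [Fintype V] : ℕ :=
  sInf {k | ∃ S : Finset V, G.IsZeroForcingSet ↑S ∧ S.card = k}


open SimpleGraph Finset

set_option linter.unusedSectionVars false
set_option linter.unusedVariables false
set_option maxHeartbeats 1600000

section Aux1

variable {V : Type*} [DecidableEq V] {G : SimpleGraph V}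

/-- From two paths with adjacent endpoints, suitably disjoint, extract a short cycle. -/
lemma exists_cycle_of_two_paths {a b : V} (hab : G.Adj a b) :
    ∀ {v : V} (p : G.Walk v a) (q : G.Walk v b), p.IsPath → q.IsPath →
      b ∉ p.support → a ∉ q.support →
      ∃ (c : V) (w : G.Walk c c), w.IsCycle ∧ w.length ≤ p.length + q.length + 1 := by
  intro v p
  induction p with
  | nil =>
    intro q _ _ _ haq
    exact absurd q.start_mem_support haq
  | @cons v v₁ a h₁ p₁ ih =>
    intro q hp hq hbp haq
    cases q with
    | nil => exact absurd ((Walk.cons h₁ p₁).start_mem_support) hbp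
    | @cons _ v₂ _ h₂ q₁ =>
      rw [Walk.cons_isPath_iff] at hp hq
      have hbp₁ : b ∉ p₁.support := fun hb => hbp (by
        rw [Walk.support_cons]; exact List.mem_cons_of_mem _ hb)
      have haq₁ : a ∉ q₁.support := fun ha => haq (by
        rw [Walk.support_cons]; exact List.mem_cons_of_mem _ ha)
      by_cases h12 : v₁ = v₂
      · subst h12
        obtain ⟨c, w, hw, hlen⟩ := ih hab q₁ hp.1 hq.1 hbp₁ haq₁
        exact ⟨c, w, hw, by simp only [Walk.length_cons]; omega⟩
      · by_cases hv₁ : v₁ ∈ (Walk.cons h₂ q₁).support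
        · -- close a cycle using the prefix of q up to v₁
          have hq'path : (Walk.cons h₂ q₁).IsPath := by
            rw [Walk.cons_isPath_iff]; exact hq
          have htpath : ((Walk.cons h₂ q₁).takeUntil v₁ hv₁).IsPath := hq'path.takeUntil hv₁
          refine ⟨v, Walk.cons h₁ ((Walk.cons h₂ q₁).takeUntil v₁ hv₁).reverse, ?_, ?_⟩
          · rw [Walk.cons_isCycle_iff]
            refine ⟨htpath.reverse, ?_⟩
            rw [Walk.edges_reverse, List.mem_reverse]
            intro hmem
            have hmem' : s(v, v₁) ∈ (Walk.cons h₂ q₁).edges :=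
              ((Walk.cons h₂ q₁).edges_takeUntil_subset hv₁) hmem
            simp only [Walk.edges_cons, List.mem_cons] at hmem'
            rcases hmem' with heq | hmem'
            · rw [Sym2.eq_iff] at heq
              rcases heq with ⟨-, h'⟩ | ⟨h', -⟩
              · exact h12 h'
              · exact G.irrefl (h' ▸ h₂)
            · exact hq.2 (q₁.fst_mem_support_of_mem_edges hmem')
          · have := Walk.length_takeUntil_le (Walk.cons h₂ q₁) hv₁
            simp only [Walk.length_cons, Walk.length_reverse] at *
            omega
        · by_cases hav₁ : a = v₁
          · -- p is essentially a single edge v ~ a : close directly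
            subst hav₁
            have hqpath : (Walk.cons h₂ q₁).IsPath := by
              rw [Walk.cons_isPath_iff]; exact hq
            refine ⟨v, Walk.cons h₁ (Walk.cons hab (Walk.cons h₂ q₁).reverse), ?_, ?_⟩
            · rw [Walk.cons_isCycle_iff]
              constructor
              · rw [Walk.cons_isPath_iff]
                constructor
                · exact hqpath.reverse
                · rwa [Walk.support_reverse, List.mem_reverse]
              · simp only [Walk.edges_cons, List.mem_cons]
                rintro (heq | hmem)
                · rw [Sym2.eq_iff] at heq
                  rcases heq with ⟨h', -⟩ | ⟨h', -⟩
                  · exact G.irrefl (h' ▸ h₁)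
                  · exact hbp (by rw [← h']; exact (Walk.cons h₁ p₁).start_mem_support)
                · rw [Walk.edges_reverse, List.mem_reverse] at hmem
                  exact hv₁ ((Walk.cons h₂ q₁).snd_mem_support_of_mem_edges hmem)
            · simp only [Walk.length_cons, Walk.length_reverse]
              omega
          · -- recurse, extending q backwards across the edge v ~ v₁
            have hq2path : (Walk.cons h₁.symm (Walk.cons h₂ q₁)).IsPath := by
              rw [Walk.cons_isPath_iff]
              exact ⟨by rw [Walk.cons_isPath_iff]; exact hq, hv₁⟩
            have haq2 : a ∉ (Walk.cons h₁.symm (Walk.cons h₂ q₁)).support := by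
              rw [Walk.support_cons]
              intro hmem
              rcases List.mem_cons.mp hmem with h' | h'
              · exact hav₁ h'
              · exact haq h'
            obtain ⟨c, w, hw, hlen⟩ := ih hab _ hp.1 hq2path hbp₁ haq2
            refine ⟨c, w, hw, ?_⟩
            simp only [Walk.length_cons] at *
            omega

section DistFacts

variable {g : ℕ} (hcyc : ∀ (c : V) (w : G.Walk c c), w.IsCycle → g ≤ w.length)

lemma grade_aux {v u : V} (p : G.Walk v u) (hsp : p.length = G.dist v u) {x : V}
    (hx : x ∈ p.support) : G.dist v x ≤ p.length ∧ (G.dist v x = p.length → x = u) := by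
  have h1 : G.dist v x ≤ (p.takeUntil x hx).length := G.dist_le _
  have h2 : (p.takeUntil x hx).length + (p.dropUntil x hx).length = p.length := by
    have := congrArg Walk.length (p.take_spec hx)
    rwa [Walk.length_append] at this
  constructor
  · omega
  · intro heq
    have h3 : (p.dropUntil x hx).length = 0 := by
      have h4 : G.dist v u ≤ (p.takeUntil x hx).length := by omega
      omega
    exact Walk.eq_of_length_eq_zero h3

lemma reach_of_dist_pos {v u : V} {k : ℕ} (hk : G.dist v u = k) (h1 : 1 ≤ k) :
    G.Reachable v u := by
  have : G.dist v u ≠ 0 := by omega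
  exact (dist_ne_zero_iff_ne_and_reachable.mp this).2

/-- extend a shortest path by one edge, staying a path when the new endpoint is farther -/
lemma ext_path {v p₁ u : V} (q₁ : G.Walk v p₁) (hq₁ : q₁.IsPath)
    (hl₁ : q₁.length = G.dist v p₁) (ha₁ : G.Adj p₁ u) (hu : q₁.length < G.dist v u) :
    ∃ P : G.Walk v u, P.IsPath ∧ P.length = q₁.length + 1 ∧
      (∀ x, x ∈ P.support ↔ (x = u ∨ x ∈ q₁.support)) := by
  have hu_not : u ∉ q₁.support := by
    intro hmem
    have := (grade_aux q₁ hl₁ hmem).1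
    omega
  refine ⟨(Walk.cons ha₁.symm q₁.reverse).reverse, ?_, ?_, ?_⟩
  · apply Walk.IsPath.reverse
    rw [Walk.cons_isPath_iff]
    constructor
    · exact hq₁.reverse
    · rwa [Walk.support_reverse, List.mem_reverse]
  · simp [Walk.length_reverse, Walk.length_cons]
  · intro x
    rw [Walk.support_reverse, List.mem_reverse, Walk.support_cons, List.mem_cons,
      Walk.support_reverse, List.mem_reverse]

include hcyc in
/-- F1 : unique parent. -/
lemma unique_parent {r : ℕ} (hr : 2 * r + 1 ≤ g) {v u p₁ p₂ : V} {k : ℕ}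
    (hu : G.dist v u = k) (h1 : 1 ≤ k) (hk : k ≤ r)
    (ha₁ : G.Adj u p₁) (ha₂ : G.Adj u p₂)
    (hd₁ : G.dist v p₁ + 1 = k) (hd₂ : G.dist v p₂ + 1 = k) : p₁ = p₂ := by
  have hreachu : G.Reachable v u := reach_of_dist_pos hu h1
  by_cases hk1 : k = 1
  · have e₁ : p₁ = v := by
      have h0 : G.dist v p₁ = 0 := by omega
      have hre : G.Reachable v p₁ := hreachu.trans ⟨Walk.cons ha₁ Walk.nil⟩
      exact (hre.dist_eq_zero_iff.mp h0).symm
    have e₂ : p₂ = v := by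
      have h0 : G.dist v p₂ = 0 := by omega
      have hre : G.Reachable v p₂ := hreachu.trans ⟨Walk.cons ha₂ Walk.nil⟩
      exact (hre.dist_eq_zero_iff.mp h0).symm
    rw [e₁, e₂]
  · by_contra hne
    obtain ⟨q₁, hq₁, hl₁⟩ := (reach_of_dist_pos (rfl : G.dist v p₁ = _) (by omega)).exists_path_of_dist
    obtain ⟨q₂, hq₂, hl₂⟩ := (reach_of_dist_pos (rfl : G.dist v p₂ = _) (by omega)).exists_path_of_dist
    obtain ⟨P, hP, hPlen, hPsup⟩ := ext_path q₁ hq₁ hl₁ ha₁.symm (by omega)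
    have hp₂P : p₂ ∉ P.support := by
      rw [hPsup]
      rintro (h' | hmem)
      · rw [h'] at hd₂; omega
      · have hle := (grade_aux q₁ hl₁ hmem).1
        have heq : G.dist v p₂ = q₁.length := by omega
        exact hne ((grade_aux q₁ hl₁ hmem).2 heq).symm
    have hu_notq₂ : u ∉ q₂.support := by
      intro hmem
      have := (grade_aux q₂ hl₂ hmem).1
      omega
    obtain ⟨c, w, hw, hlen⟩ := exists_cycle_of_two_paths ha₂ P q₂ hP hq₂ hp₂P hu_notq₂
    have := hcyc c w hw
    omega

include hcyc in
/-- F2 : no intra-level edges. -/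
lemma no_intra_level {r : ℕ} (hr : 2 * r + 1 ≤ g) {v u w : V} {k : ℕ}
    (hu : G.dist v u = k) (hw : G.dist v w = k) (h1 : 1 ≤ k) (hk : k + 1 ≤ r)
    (hadj : G.Adj u w) : False := by
  obtain ⟨q₁, hq₁, hl₁⟩ := (reach_of_dist_pos hu h1).exists_path_of_dist
  obtain ⟨q₂, hq₂, hl₂⟩ := (reach_of_dist_pos hw h1).exists_path_of_dist
  have hwq₁ : w ∉ q₁.support := by
    intro hmem
    have heq : G.dist v w = q₁.length := by omega
    have := (grade_aux q₁ hl₁ hmem).2 heq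
    exact G.irrefl (this ▸ hadj)
  have huq₂ : u ∉ q₂.support := by
    intro hmem
    have heq : G.dist v u = q₂.length := by omega
    have := (grade_aux q₂ hl₂ hmem).2 heq
    exact G.irrefl (this ▸ hadj)
  obtain ⟨c, cw, hcw, hlen⟩ := exists_cycle_of_two_paths hadj q₁ q₂ hq₁ hq₂ hwq₁ huq₂
  have := hcyc c cw hcw
  omega

include hcyc in
/-- F3 : two distinct same-level vertices share no child. -/
lemma no_shared_child {r : ℕ} (hr : 2 * r + 1 ≤ g) {v u w c : V} {k : ℕ}
    (hu : G.dist v u = k) (hw : G.dist v w = k) (huw : u ≠ w) (h1 : 1 ≤ k) (hk : k + 1 ≤ r)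
    (hc : G.dist v c = k + 1) (ha₁ : G.Adj u c) (ha₂ : G.Adj w c) : False := by
  obtain ⟨q₁, hq₁, hl₁⟩ := (reach_of_dist_pos hu h1).exists_path_of_dist
  obtain ⟨q₂, hq₂, hl₂⟩ := (reach_of_dist_pos hw h1).exists_path_of_dist
  obtain ⟨P, hP, hPlen, hPsup⟩ := ext_path q₁ hq₁ hl₁ ha₁ (by omega)
  have hwP : w ∉ P.support := by
    rw [hPsup]
    rintro (h' | hmem)
    · rw [h'] at hw; omega
    · have heq : G.dist v w = q₁.length := by omega
      exact huw ((grade_aux q₁ hl₁ hmem).2 heq).symm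
  have hcq₂ : c ∉ q₂.support := by
    intro hmem
    have := (grade_aux q₂ hl₂ hmem).1
    omega
  obtain ⟨d, cw, hcw, hlen⟩ := exists_cycle_of_two_paths ha₂.symm P q₂ hP hq₂ hwP hcq₂
  have := hcyc d cw hcw
  omega

lemma adj_dist_bounds {v u c : V} (hadj : G.Adj u c) {k : ℕ} (hk : G.dist v u = k)
    (h1 : 1 ≤ k) : k - 1 ≤ G.dist v c ∧ G.dist v c ≤ k + 1 := by
  have hreach : G.Reachable v u := reach_of_dist_pos hk h1
  obtain ⟨p, hp, hlen⟩ := hreach.exists_path_of_dist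
  constructor
  · have hreach' : G.Reachable v c := hreach.trans ⟨Walk.cons hadj Walk.nil⟩
    obtain ⟨q, hq, hlenq⟩ := hreach'.exists_path_of_dist
    have : G.dist v u ≤ (q.concat hadj.symm).length := G.dist_le _
    rw [Walk.length_concat] at this
    omega
  · have : G.dist v c ≤ (p.concat hadj).length := G.dist_le _
    rw [Walk.length_concat] at this
    omega

end DistFacts

end Aux1

section Aux2

variable {V : Type*} [Fintype V] [DecidableEq V] {G : SimpleGraph V} [DecidableRel G.Adj]

section Counting

variable {g r δ : ℕ}

/-- every vertex at level `k ∈ [1, r-1]` has at least `δ - 1` neighbours at level `k+1`. -/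
lemma child_count (hcyc : ∀ (c : V) (w : G.Walk c c), w.IsCycle → g ≤ w.length)
    (hr : 2 * r + 1 ≤ g) (hdeg : ∀ u : V, δ ≤ G.degree u)
    {v u : V} {k : ℕ} (hu : G.dist v u = k) (h1 : 1 ≤ k) (hk : k + 1 ≤ r) :
    δ - 1 ≤ ((G.neighborFinset u).filter (fun c => G.dist v c = k + 1)).card := by
  classical
  set N := G.neighborFinset u with hN
  have hsplit := Finset.card_filter_add_card_filter_not
    (s := N) (p := fun c => G.dist v c = k + 1)
  have hB : (N.filter (fun c => ¬ G.dist v c = k + 1)).card ≤ 1 := by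
    rw [Finset.card_le_one]
    intro x hx y hy
    rw [Finset.mem_filter, hN, G.mem_neighborFinset] at hx hy
    have hxd : G.dist v x + 1 = k := by
      rcases adj_dist_bounds hx.1 hu h1 with ⟨hlo, hhi⟩
      rcases Nat.lt_or_ge (G.dist v x) k with hlt | hge
      · omega
      · exfalso
        have : G.dist v x = k := by omega
        exact no_intra_level hcyc hr hu this h1 hk hx.1
    have hyd : G.dist v y + 1 = k := by
      rcases adj_dist_bounds hy.1 hu h1 with ⟨hlo, hhi⟩
      rcases Nat.lt_or_ge (G.dist v y) k with hlt | hge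
      · omega
      · exfalso
        have : G.dist v y = k := by omega
        exact no_intra_level hcyc hr hu this h1 hk hy.1
    have hkr : k ≤ r := by omega
    exact unique_parent hcyc hr hu h1 hkr hx.1 hy.1 hxd hyd
  have hdegu : δ ≤ N.card := by
    rw [hN, G.card_neighborFinset_eq_degree]; exact hdeg u
  omega

/-- key sphere-growth recursion. -/
lemma key_rec (hcyc : ∀ (c : V) (w : G.Walk c c), w.IsCycle → g ≤ w.length)
    (hr : 2 * r + 1 ≤ g) (hdeg : ∀ u : V, δ ≤ G.degree u)
    (C D : Finset V) (hclosed : ∀ u ∈ C \ D, G.neighborFinset u ⊆ C)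
    (v : V) {k : ℕ} (h1 : 1 ≤ k) (hk : k + 1 ≤ r) :
    (δ - 1) * (((C \ D).filter (fun u => G.dist v u = k)).card) ≤
      (C.filter (fun c => G.dist v c = k + 1)).card := by
  classical
  set S := (C \ D).filter (fun u => G.dist v u = k) with hS
  have hdisj : ∀ u₁ ∈ S, ∀ u₂ ∈ S, u₁ ≠ u₂ →
      Disjoint ((G.neighborFinset u₁).filter (fun c => G.dist v c = k + 1))
        ((G.neighborFinset u₂).filter (fun c => G.dist v c = k + 1)) := by
    intro u₁ hu₁ u₂ hu₂ hne
    rw [Finset.disjoint_left]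
    intro c hc₁ hc₂
    rw [Finset.mem_filter, G.mem_neighborFinset] at hc₁ hc₂
    rw [hS, Finset.mem_filter] at hu₁ hu₂
    exact no_shared_child hcyc hr hu₁.2 hu₂.2 hne h1 hk hc₁.2 hc₁.1 hc₂.1
  calc (δ - 1) * S.card = ∑ _u ∈ S, (δ - 1) := by rw [Finset.sum_const, smul_eq_mul, mul_comm]
    _ ≤ ∑ u ∈ S, ((G.neighborFinset u).filter (fun c => G.dist v c = k + 1)).card := by
        apply Finset.sum_le_sum
        intro u hu
        rw [hS, Finset.mem_filter] at hu
        exact child_count hcyc hr hdeg hu.2 h1 hk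
    _ = (S.biUnion (fun u => (G.neighborFinset u).filter (fun c => G.dist v c = k + 1))).card :=
        (Finset.card_biUnion hdisj).symm
    _ ≤ (C.filter (fun c => G.dist v c = k + 1)).card := by
        apply Finset.card_le_card
        intro c hc
        rw [Finset.mem_biUnion] at hc
        obtain ⟨u, huS, hcu⟩ := hc
        rw [Finset.mem_filter] at hcu ⊢
        rw [hS, Finset.mem_filter] at huS
        exact ⟨hclosed u huS.1 hcu.1, hcu.2⟩

/-- PF : lower bound for the ball around a vertex with all-neighbours-inside property. -/
lemma forcer_bound (hcyc : ∀ (c : V) (w : G.Walk c c), w.IsCycle → g ≤ w.length)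
    (hr : 2 * r + 1 ≤ g) (hdeg : ∀ u : V, δ ≤ G.degree u) (hr1 : 1 ≤ r)
    (C D : Finset V) (hD : D ⊆ C) (hclosed : ∀ u ∈ C \ D, G.neighborFinset u ⊆ C)
    {v : V} (hv : v ∈ C \ D) :
    (δ - 1) ^ r ≤ C.card +
      ∑ l ∈ Finset.Ico 1 r, (δ - 1) ^ (r - l) * ((D.filter (fun y => G.dist v y = l)).card) := by
  classical
  have main : ∀ k, 1 ≤ k → k ≤ r →
      (δ - 1) ^ k ≤ ((C.filter (fun y => G.dist v y = k)).card) +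
        ∑ l ∈ Finset.Ico 1 k, (δ - 1) ^ (k - l) * ((D.filter (fun y => G.dist v y = l)).card) := by
    intro k hk1
    induction k, hk1 using Nat.le_induction with
    | base =>
      intro h1r
      simp only [Finset.Ico_self, Finset.sum_empty, add_zero, pow_one]
      have hsub : G.neighborFinset v ⊆ C.filter (fun y => G.dist v y = 1) := by
        intro y hy
        rw [G.mem_neighborFinset] at hy
        rw [Finset.mem_filter]
        exact ⟨hclosed v hv (by rwa [G.mem_neighborFinset]), dist_eq_one_iff_adj.mpr hy⟩
      have := Finset.card_le_card hsub
      have hd := hdeg v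
      rw [G.card_neighborFinset_eq_degree] at this
      omega
    | succ k hk1 ih =>
      intro hkr
      have hkr' : k ≤ r := by omega
      have step := key_rec hcyc hr hdeg C D hclosed v hk1 hkr
      have hCsplit : ((C.filter (fun y => G.dist v y = k)).card) ≤
          (((C \ D).filter (fun y => G.dist v y = k)).card) +
          ((D.filter (fun y => G.dist v y = k)).card) := by
        have : C.filter (fun y => G.dist v y = k) ⊆
            ((C \ D).filter (fun y => G.dist v y = k)) ∪ (D.filter (fun y => G.dist v y = k)) := by
          intro y hy
          rw [Finset.mem_filter] at hy
          rw [Finset.mem_union, Finset.mem_filter, Finset.mem_filter, Finset.mem_sdiff]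
          by_cases hyD : y ∈ D
          · exact Or.inr ⟨hyD, hy.2⟩
          · exact Or.inl ⟨⟨hy.1, hyD⟩, hy.2⟩
        calc ((C.filter (fun y => G.dist v y = k)).card) ≤ _ := Finset.card_le_card this
          _ ≤ _ := Finset.card_union_le _ _
      calc (δ - 1) ^ (k + 1) = (δ - 1) * (δ - 1) ^ k := by ring
        _ ≤ (δ - 1) * (((C.filter (fun y => G.dist v y = k)).card) +
              ∑ l ∈ Finset.Ico 1 k, (δ - 1) ^ (k - l) *
                ((D.filter (fun y => G.dist v y = l)).card)) :=
            Nat.mul_le_mul_left _ (ih hkr')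
        _ = (δ - 1) * ((C.filter (fun y => G.dist v y = k)).card) +
              ∑ l ∈ Finset.Ico 1 k, (δ - 1) * ((δ - 1) ^ (k - l) *
                ((D.filter (fun y => G.dist v y = l)).card)) := by
            rw [Nat.mul_add, Finset.mul_sum]
        _ ≤ ((C.filter (fun y => G.dist v y = (k+1))).card)
              + (δ - 1) * ((D.filter (fun y => G.dist v y = k)).card)
              + ∑ l ∈ Finset.Ico 1 k, (δ - 1) ^ (k + 1 - l) *
                ((D.filter (fun y => G.dist v y = l)).card) := by
            have h2 : (δ - 1) * ((C.filter (fun y => G.dist v y = k)).card) ≤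
                ((C.filter (fun y => G.dist v y = (k+1))).card)
                + (δ - 1) * ((D.filter (fun y => G.dist v y = k)).card) := by
              calc (δ - 1) * ((C.filter (fun y => G.dist v y = k)).card)
                  ≤ (δ - 1) * ((((C \ D).filter (fun y => G.dist v y = k)).card)
                    + ((D.filter (fun y => G.dist v y = k)).card)) :=
                    Nat.mul_le_mul_left _ hCsplit
                _ = (δ - 1) * (((C \ D).filter (fun y => G.dist v y = k)).card)
                    + (δ - 1) * ((D.filter (fun y => G.dist v y = k)).card) := by ring
                _ ≤ _ := by omega
            have h3 : ∀ l ∈ Finset.Ico 1 k,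
                (δ - 1) * ((δ - 1) ^ (k - l) * ((D.filter (fun y => G.dist v y = l)).card)) =
                (δ - 1) ^ (k + 1 - l) * ((D.filter (fun y => G.dist v y = l)).card) := by
              intro l hl
              rw [Finset.mem_Ico] at hl
              rw [← mul_assoc, ← pow_succ']
              congr 2
              omega
            rw [Finset.sum_congr rfl h3]
            omega
        _ = ((C.filter (fun y => G.dist v y = (k+1))).card)
              + ∑ l ∈ Finset.Ico 1 (k + 1), (δ - 1) ^ (k + 1 - l) *
                ((D.filter (fun y => G.dist v y = l)).card) := by
            rw [Finset.sum_Ico_succ_top hk1]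
            have : k + 1 - k = 1 := by omega
            rw [this, pow_one]
            ring
  have := main r hr1 le_rfl
  have hfin : ((C.filter (fun y => G.dist v y = r)).card) ≤ C.card :=
    Finset.card_le_card (Finset.filter_subset _ _)
  omega

/-- PD : upper bound for sphere sizes around any vertex. -/
lemma defect_bound (hcyc : ∀ (c : V) (w : G.Walk c c), w.IsCycle → g ≤ w.length)
    (hr : 2 * r + 1 ≤ g) (hdeg : ∀ u : V, δ ≤ G.degree u)
    (C D : Finset V) (hD : D ⊆ C) (hclosed : ∀ u ∈ C \ D, G.neighborFinset u ⊆ C)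
    (x : V) :
    ∀ j k, k + j = r → 1 ≤ k →
      (δ - 1) ^ (r - k) * ((C.filter (fun y => G.dist x y = k)).card) ≤ C.card +
        ∑ l ∈ Finset.Ico k r, (δ - 1) ^ (r - l) * ((D.filter (fun y => G.dist x y = l)).card) := by
  classical
  intro j
  induction j with
  | zero =>
    intro k hkr _
    have : k = r := by omega
    subst this
    simp only [Nat.sub_self, pow_zero, one_mul, Finset.Ico_self, Finset.sum_empty, add_zero]
    exact Finset.card_le_card (Finset.filter_subset _ _)
  | succ j ih =>
    intro k hkr hk1
    have hkr' : k + 1 ≤ r := by omega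
    have step := key_rec hcyc hr hdeg C D hclosed x hk1 hkr'
    have hCsplit : ((C.filter (fun y => G.dist x y = k)).card) ≤
        (((C \ D).filter (fun y => G.dist x y = k)).card) +
        ((D.filter (fun y => G.dist x y = k)).card) := by
      have hsub : C.filter (fun y => G.dist x y = k) ⊆
          ((C \ D).filter (fun y => G.dist x y = k)) ∪ (D.filter (fun y => G.dist x y = k)) := by
        intro y hy
        rw [Finset.mem_filter] at hy
        rw [Finset.mem_union, Finset.mem_filter, Finset.mem_filter, Finset.mem_sdiff]
        by_cases hyD : y ∈ D
        · exact Or.inr ⟨hyD, hy.2⟩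
        · exact Or.inl ⟨⟨hy.1, hyD⟩, hy.2⟩
      calc ((C.filter (fun y => G.dist x y = k)).card) ≤ _ := Finset.card_le_card hsub
        _ ≤ _ := Finset.card_union_le _ _
    have hrk : r - k = j + 1 := by omega
    have hrk1 : r - (k + 1) = j := by omega
    calc (δ - 1) ^ (r - k) * ((C.filter (fun y => G.dist x y = k)).card)
        = (δ - 1) ^ j * ((δ - 1) * ((C.filter (fun y => G.dist x y = k)).card)) := by
          rw [hrk]; ring
      _ ≤ (δ - 1) ^ j * (((C.filter (fun y => G.dist x y = (k+1))).card)
            + (δ - 1) * ((D.filter (fun y => G.dist x y = k)).card)) := by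
          apply Nat.mul_le_mul_left
          calc (δ - 1) * ((C.filter (fun y => G.dist x y = k)).card)
              ≤ (δ - 1) * ((((C \ D).filter (fun y => G.dist x y = k)).card)
                + ((D.filter (fun y => G.dist x y = k)).card)) := Nat.mul_le_mul_left _ hCsplit
            _ = (δ - 1) * (((C \ D).filter (fun y => G.dist x y = k)).card)
                + (δ - 1) * ((D.filter (fun y => G.dist x y = k)).card) := by ring
            _ ≤ _ := by omega
      _ = (δ - 1) ^ (r - (k+1)) * ((C.filter (fun y => G.dist x y = (k+1))).card)
            + (δ - 1) ^ (r - k) * ((D.filter (fun y => G.dist x y = k)).card) := by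
          rw [hrk, hrk1]; ring
      _ ≤ (C.card + ∑ l ∈ Finset.Ico (k+1) r, (δ - 1) ^ (r - l) *
              ((D.filter (fun y => G.dist x y = l)).card))
            + (δ - 1) ^ (r - k) * ((D.filter (fun y => G.dist x y = k)).card) := by
          have := ih (k+1) (by omega) (by omega)
          omega
      _ = C.card + ∑ l ∈ Finset.Ico k r, (δ - 1) ^ (r - l) *
            ((D.filter (fun y => G.dist x y = l)).card) := by
          rw [Finset.sum_eq_sum_Ico_succ_bot (by omega : k < r)]
          ring

/-- swap the double counting between two families of spheres. -/
lemma swap_cnt (A B : Finset V) (W : ℕ → ℕ) (s : Finset ℕ) :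
    (∑ v ∈ A, ∑ l ∈ s, W l * ((B.filter (fun y => G.dist v y = l)).card)) =
    (∑ x ∈ B, ∑ l ∈ s, W l * ((A.filter (fun y => G.dist x y = l)).card)) := by
  classical
  have expand : ∀ (A B : Finset V), (∑ v ∈ A, ∑ l ∈ s, W l * ((B.filter (fun y => G.dist v y = l)).card)) =
      ∑ v ∈ A, ∑ l ∈ s, ∑ x ∈ B, W l * (if G.dist v x = l then 1 else 0) := by
    intro A B
    refine Finset.sum_congr rfl fun v _ => Finset.sum_congr rfl fun l _ => ?_
    rw [Finset.card_filter, Finset.mul_sum]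
  rw [expand A B, expand B A]
  calc (∑ v ∈ A, ∑ l ∈ s, ∑ x ∈ B, W l * (if G.dist v x = l then 1 else 0))
      = ∑ v ∈ A, ∑ x ∈ B, ∑ l ∈ s, W l * (if G.dist v x = l then 1 else 0) :=
        Finset.sum_congr rfl fun v _ => Finset.sum_comm
    _ = ∑ x ∈ B, ∑ v ∈ A, ∑ l ∈ s, W l * (if G.dist v x = l then 1 else 0) :=
        Finset.sum_comm
    _ = ∑ x ∈ B, ∑ l ∈ s, ∑ v ∈ A, W l * (if G.dist x v = l then 1 else 0) := by
        refine Finset.sum_congr rfl fun x _ => ?_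
        rw [Finset.sum_comm]
        refine Finset.sum_congr rfl fun l _ => Finset.sum_congr rfl fun v _ => ?_
        rw [G.dist_comm]

lemma double_sum_Ico {r : ℕ} (F : ℕ → ℕ) :
    (∑ k ∈ Finset.Ico 1 r, ∑ l ∈ Finset.Ico k r, F l) = ∑ l ∈ Finset.Ico 1 r, l * F l := by
  classical
  have h1 : ∀ k ∈ Finset.Ico 1 r, (∑ l ∈ Finset.Ico k r, F l)
      = ∑ l ∈ Finset.Ico 1 r, if k ≤ l then F l else 0 := by
    intro k hk
    rw [Finset.mem_Ico] at hk
    rw [Finset.sum_ite, Finset.sum_const_zero, add_zero]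
    apply Finset.sum_congr
    · ext l
      simp only [Finset.mem_filter, Finset.mem_Ico]
      omega
    · intro _ _; rfl
  rw [Finset.sum_congr rfl h1, Finset.sum_comm]
  refine Finset.sum_congr rfl fun l hl => ?_
  rw [Finset.mem_Ico] at hl
  rw [Finset.sum_ite, Finset.sum_const_zero, add_zero, Finset.sum_const, smul_eq_mul]
  congr 1
  have heq : (Finset.Ico 1 r).filter (fun k => k ≤ l) = Finset.Ico 1 (l+1) := by
    ext k
    simp only [Finset.mem_filter, Finset.mem_Ico]
    omega
  rw [heq, Nat.card_Ico]
  omega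

lemma weight_le {δ r l : ℕ} (hδ : 3 ≤ δ) (h1 : 1 ≤ l) (hl : l ≤ r) :
    l * (δ - 1) ^ (r - l) ≤ (δ - 1) ^ (r - 1) := by
  have h2 : 2 ≤ δ - 1 := by omega
  have hll : l ≤ 2 ^ (l - 1) := by
    clear hl
    induction l with
    | zero => simp
    | succ n ihn =>
      rcases Nat.eq_or_lt_of_le h1 with h | h
      · have : n = 0 := by omega
        subst this; simp
      · have hn1 : 1 ≤ n := by omega
        have := ihn hn1
        have h2n : 1 ≤ 2 ^ (n - 1) := Nat.one_le_two_pow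
        have : n + 1 ≤ 2 ^ n := by
          have : 2 ^ n = 2 * 2 ^ (n - 1) := by
            conv_lhs => rw [show n = (n - 1) + 1 by omega]
            rw [pow_succ]; ring
          omega
        simpa using this
  calc l * (δ - 1) ^ (r - l) ≤ 2 ^ (l - 1) * (δ - 1) ^ (r - l) :=
        Nat.mul_le_mul_right _ hll
    _ ≤ (δ - 1) ^ (l - 1) * (δ - 1) ^ (r - l) :=
        Nat.mul_le_mul_right _ (Nat.pow_le_pow_left h2 _)
    _ = (δ - 1) ^ (r - 1) := by
        rw [← pow_add]
        congr 1
        omega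

lemma pair_sum_le {r : ℕ} (D : Finset V) {x : V} (hx : x ∈ D) :
    (∑ l ∈ Finset.Ico 1 r, ((D.filter (fun y => G.dist x y = l)).card)) ≤ D.card - 1 := by
  classical
  have hdisj : ∀ l₁ ∈ Finset.Ico 1 r, ∀ l₂ ∈ Finset.Ico 1 r, l₁ ≠ l₂ →
      Disjoint (D.filter (fun y => G.dist x y = l₁)) (D.filter (fun y => G.dist x y = l₂)) := by
    intro l₁ _ l₂ _ hne
    rw [Finset.disjoint_left]
    intro y hy₁ hy₂
    rw [Finset.mem_filter] at hy₁ hy₂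
    exact hne (hy₁.2 ▸ hy₂.2 ▸ rfl)
  calc (∑ l ∈ Finset.Ico 1 r, ((D.filter (fun y => G.dist x y = l)).card))
      = ((Finset.Ico 1 r).biUnion (fun l => D.filter (fun y => G.dist x y = l))).card :=
        (Finset.card_biUnion hdisj).symm
    _ ≤ (D.erase x).card := by
        apply Finset.card_le_card
        intro y hy
        rw [Finset.mem_biUnion] at hy
        obtain ⟨l, hl, hyl⟩ := hy
        rw [Finset.mem_Ico] at hl
        rw [Finset.mem_filter] at hyl
        rw [Finset.mem_erase]
        refine ⟨?_, hyl.1⟩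
        intro heq
        rw [heq] at hyl
        rw [G.dist_self] at hyl
        omega
    _ = D.card - 1 := Finset.card_erase_of_mem hx

/-- The master counting inequality. -/
lemma master_count (hcyc : ∀ (c : V) (w : G.Walk c c), w.IsCycle → g ≤ w.length)
    (hr : 2 * r + 1 ≤ g) (hdeg : ∀ u : V, δ ≤ G.degree u) (hr1 : 1 ≤ r) (hδ : 3 ≤ δ)
    (C D : Finset V) (hD : D ⊆ C) (hclosed : ∀ u ∈ C \ D, G.neighborFinset u ⊆ C) :
    (C \ D).card * (δ - 1) ^ r ≤
      (C \ D).card * C.card +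
        D.card * ((r - 1) * C.card + (δ - 1) ^ (r - 1) * (D.card - 1)) := by
  classical
  have step1 : (C \ D).card * (δ - 1) ^ r ≤
      (C \ D).card * C.card + ∑ v ∈ C \ D, ∑ l ∈ Finset.Ico 1 r,
        (δ - 1) ^ (r - l) * ((D.filter (fun y => G.dist v y = l)).card) := by
    calc (C \ D).card * (δ - 1) ^ r = ∑ _v ∈ C \ D, (δ - 1) ^ r := by
          rw [Finset.sum_const, smul_eq_mul]
      _ ≤ ∑ v ∈ C \ D, (C.card + ∑ l ∈ Finset.Ico 1 r,
            (δ - 1) ^ (r - l) * ((D.filter (fun y => G.dist v y = l)).card)) := by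
          apply Finset.sum_le_sum
          intro v hv
          exact forcer_bound hcyc hr hdeg hr1 C D hD hclosed hv
      _ = _ := by rw [Finset.sum_add_distrib, Finset.sum_const, smul_eq_mul]
  have step2 : (∑ v ∈ C \ D, ∑ l ∈ Finset.Ico 1 r,
        (δ - 1) ^ (r - l) * ((D.filter (fun y => G.dist v y = l)).card)) =
      ∑ x ∈ D, ∑ l ∈ Finset.Ico 1 r,
        (δ - 1) ^ (r - l) * (((C \ D).filter (fun y => G.dist x y = l)).card) :=
    swap_cnt _ _ _ _
  have step3 : ∀ x ∈ D, (∑ l ∈ Finset.Ico 1 r,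
        (δ - 1) ^ (r - l) * (((C \ D).filter (fun y => G.dist x y = l)).card)) ≤
      (r - 1) * C.card + (δ - 1) ^ (r - 1) * (D.card - 1) := by
    intro x hx
    have hsub : ∀ l, (((C \ D).filter (fun y => G.dist x y = l)).card) ≤
        ((C.filter (fun y => G.dist x y = l)).card) := by
      intro l
      apply Finset.card_le_card
      exact Finset.filter_subset_filter _ (Finset.sdiff_subset)
    calc (∑ l ∈ Finset.Ico 1 r,
          (δ - 1) ^ (r - l) * (((C \ D).filter (fun y => G.dist x y = l)).card))
        ≤ ∑ k ∈ Finset.Ico 1 r,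
          (C.card + ∑ l ∈ Finset.Ico k r, (δ - 1) ^ (r - l) *
            ((D.filter (fun y => G.dist x y = l)).card)) := by
          apply Finset.sum_le_sum
          intro k hk
          rw [Finset.mem_Ico] at hk
          calc (δ - 1) ^ (r - k) * (((C \ D).filter (fun y => G.dist x y = k)).card)
              ≤ (δ - 1) ^ (r - k) * ((C.filter (fun y => G.dist x y = k)).card) :=
                Nat.mul_le_mul_left _ (hsub k)
            _ ≤ _ := defect_bound hcyc hr hdeg C D hD hclosed x (r - k) k
                (by omega) hk.1
      _ = (r - 1) * C.card + ∑ k ∈ Finset.Ico 1 r, ∑ l ∈ Finset.Ico k r,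
            (δ - 1) ^ (r - l) * ((D.filter (fun y => G.dist x y = l)).card) := by
          rw [Finset.sum_add_distrib, Finset.sum_const, smul_eq_mul, Nat.card_Ico]
      _ = (r - 1) * C.card + ∑ l ∈ Finset.Ico 1 r,
            l * ((δ - 1) ^ (r - l) * ((D.filter (fun y => G.dist x y = l)).card)) := by
          rw [double_sum_Ico]
      _ ≤ (r - 1) * C.card + ∑ l ∈ Finset.Ico 1 r,
            (δ - 1) ^ (r - 1) * ((D.filter (fun y => G.dist x y = l)).card) := by
          apply Nat.add_le_add_left
          apply Finset.sum_le_sum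
          intro l hl
          rw [Finset.mem_Ico] at hl
          rw [← mul_assoc]
          exact Nat.mul_le_mul_right _ (weight_le hδ hl.1 (by omega))
      _ ≤ (r - 1) * C.card + (δ - 1) ^ (r - 1) * (D.card - 1) := by
          apply Nat.add_le_add_left
          rw [← Finset.mul_sum]
          exact Nat.mul_le_mul_left _ (pair_sum_le D hx)
  calc (C \ D).card * (δ - 1) ^ r
      ≤ (C \ D).card * C.card + ∑ x ∈ D, ∑ l ∈ Finset.Ico 1 r,
          (δ - 1) ^ (r - l) * (((C \ D).filter (fun y => G.dist x y = l)).card) := by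
        rw [← step2]; exact step1
    _ ≤ (C \ D).card * C.card + ∑ _x ∈ D,
          ((r - 1) * C.card + (δ - 1) ^ (r - 1) * (D.card - 1)) := by
        apply Nat.add_le_add_left
        exact Finset.sum_le_sum step3
    _ = _ := by rw [Finset.sum_const, smul_eq_mul]

end Counting

lemma forcing_step (B : Finset V) (hB : G.IsZeroForcingSet ↑B) (C : Finset V) (hBC : B ⊆ C)
    (hall : ∀ v ∈ C, G.Forced ↑B v) (hne : C ≠ Finset.univ) :
    ∃ w, w ∉ C ∧ ∃ v ∈ C, G.Adj v w ∧ ∀ u, G.Adj v u → u ≠ w → u ∈ C := by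
  classical
  have hex : ∃ u₀, u₀ ∉ C := by
    by_contra h
    push_neg at h
    exact hne (Finset.eq_univ_iff_forall.mpr h)
  obtain ⟨u₀, hu₀⟩ := hex
  have key : ∀ y, G.Forced ↑B y → y ∉ C →
      (∃ w, w ∉ C ∧ ∃ v ∈ C, G.Adj v w ∧ ∀ u, G.Adj v u → u ≠ w → u ∈ C) := by
    intro y hy
    induction hy with
    | init hmem => intro hyC; exact absurd (hBC hmem) hyC
    | @force v w hadj hv hus ihv ihus =>
      intro hwC
      by_cases hvC : v ∈ C
      · by_cases hall2 : ∀ u, G.Adj v u → u ≠ w → u ∈ C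
        · exact ⟨w, hwC, v, hvC, hadj, hall2⟩
        · push_neg at hall2
          obtain ⟨u, hu1, hu2, hu3⟩ := hall2
          exact ihus u hu1 hu2 hu3
      · exact ihv hvC
  exact key u₀ (hB u₀) hu₀

lemma forcing_chain (B : Finset V) (hB : G.IsZeroForcingSet ↑B) :
    ∀ t, B.card + t ≤ Fintype.card V →
      ∃ C F : Finset V, B ⊆ C ∧ F ⊆ C ∧ C.card = B.card + t ∧ F.card = t ∧
        (∀ v ∈ C, G.Forced ↑B v) ∧ (∀ v ∈ F, G.neighborFinset v ⊆ C) := by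
  classical
  intro t
  induction t with
  | zero =>
    intro _
    exact ⟨B, ∅, subset_rfl, Finset.empty_subset _, by simp, by simp,
      fun v hv => Forced.init (Finset.mem_coe.mpr hv), by simp⟩
  | succ t ih =>
    intro hle
    obtain ⟨C, F, h1, h2, h3, h4, h5, h6⟩ := ih (by omega)
    have hne : C ≠ Finset.univ := by
      intro h
      rw [h, Finset.card_univ] at h3
      omega
    obtain ⟨w, hwC, v, hvC, hadj, hall⟩ := forcing_step B hB C h1 h5 hne
    refine ⟨insert w C, insert v F, ?_, ?_, ?_, ?_, ?_, ?_⟩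
    · exact h1.trans (Finset.subset_insert _ _)
    · rw [Finset.insert_subset_iff]
      exact ⟨Finset.mem_insert_of_mem hvC, h2.trans (Finset.subset_insert _ _)⟩
    · rw [Finset.card_insert_of_notMem hwC, h3]
      omega
    · have hvF2 : v ∉ F := by
        intro hvF
        exact hwC (h6 v hvF (by rwa [G.mem_neighborFinset]))
      rw [Finset.card_insert_of_notMem hvF2, h4]
    · intro y hy
      rcases Finset.mem_insert.mp hy with hyw | hyC
      · subst hyw
        exact Forced.force hadj (h5 v hvC) (fun u hu hneq => h5 u (hall u hu hneq))
      · exact h5 y hyC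
    · intro y hy
      rcases Finset.mem_insert.mp hy with hyv | hyF
      · subst hyv
        intro u hu
        rw [G.mem_neighborFinset] at hu
        by_cases huw : u = w
        · subst huw; exact Finset.mem_insert_self _ _
        · exact Finset.mem_insert_of_mem (hall u hu huw)
      · exact (h6 y hyF).trans (Finset.subset_insert _ _)

lemma endgame {P z T gR δR rR : ℝ} (h3δ : 3 ≤ δR) (h7g : 7 ≤ gR)
    (hT3 : 3 ≤ T) (hPT : T * (12 * (gR + 1)) ≤ P) (hzT : z < T) (hz0 : 0 ≤ z)
    (hr0 : 0 ≤ rR) (hrg : 2 * rR ≤ gR - 1) (hTg : T ≤ (δR - 2) * gR)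
    (hcast : (P - z) * (δR - 1) ≤ (P - z) + z * rR + z * z) : False := by
  have hT0 : (0:ℝ) ≤ T := by linarith
  have hA0 : (0:ℝ) ≤ δR - 2 := by linarith
  have hA1 : (1:ℝ) ≤ δR - 2 := by linarith
  -- P is big
  have hP1 : 96 * T ≤ P := by nlinarith
  have hP0 : (0:ℝ) < P := by nlinarith
  -- z ≤ P/96
  have hz96 : 96 * z ≤ P := by nlinarith
  -- 24 * (z * rR) ≤ P
  have hzr : 24 * (z * rR) ≤ P := by
    have e1 : z * rR ≤ T * rR := mul_le_mul_of_nonneg_right hzT.le hr0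
    have e2 : T * (2 * rR) ≤ T * (gR - 1) := mul_le_mul_of_nonneg_left hrg hT0
    nlinarith
  -- 12 * (z * z) ≤ (δR - 2) * P
  have hzz : 12 * (z * z) ≤ (δR - 2) * P := by
    have e1 : z * z ≤ T * z := mul_le_mul_of_nonneg_right hzT.le hz0
    have e2 : T * z ≤ T * T := mul_le_mul_of_nonneg_left hzT.le hT0
    have e3 : T * T ≤ T * ((δR - 2) * gR) := mul_le_mul_of_nonneg_left hTg hT0
    have e4 : (δR - 2) * (T * (12 * (gR + 1))) ≤ (δR - 2) * P :=
      mul_le_mul_of_nonneg_left hPT hA0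
    nlinarith
  -- the contradiction
  have key : (P - z) * (δR - 2) ≤ z * rR + z * z := by nlinarith
  have lower : (P - z) * (δR - 2) ≥ (95/96) * (P * (δR - 2)) := by nlinarith
  have upper : z * rR + z * z ≤ (P * (δR - 2)) / 24 + (P * (δR - 2)) / 12 := by
    have u1 : 24 * (z * rR) ≤ P * (δR - 2) := by nlinarith
    linarith [hzz]
  nlinarith


end Aux2

/-- for girth `g > 6` and `δ` large enough that
`(δ−1)^(⌊(g−1)/2⌋−1)/(12(g+1)) ≥ δ + (δ−2)(g−3)`, we get `Z(G) ≥ δ + (δ−2)(g−3)`. -/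
theorem zf_girth_lower_bound {V : Type*} [Fintype V] (G : SimpleGraph V) [DecidableRel G.Adj]
    (g : ℕ) (hg : G.girth = g) (h6 : 6 < g)
    (hineq : ((G.minDegree : ℝ) + ((G.minDegree : ℝ) - 2) * ((g : ℝ) - 3)) ≤
      ((G.minDegree : ℝ) - 1) ^ ((g - 1) / 2 - 1) / (12 * ((g : ℝ) + 1))) :
    (G.minDegree : ℝ) + ((G.minDegree : ℝ) - 2) * ((g : ℝ) - 3) ≤ G.zeroForcingNumber := by
  classical
  by_contra hcon
  push_neg at hcon
  set δ := G.minDegree with hδdef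
  set Z := G.zeroForcingNumber with hZdef
  -- basic girth facts
  have hg0 : G.girth ≠ 0 := by omega
  have hnac : ¬ G.IsAcyclic := fun h => hg0 (SimpleGraph.girth_eq_zero.mpr h)
  have hcyc : ∀ (c : V) (w : G.Walk c c), w.IsCycle → g ≤ w.length := by
    intro c w hw
    have h1 : G.egirth ≤ (w.length : ℕ∞) := SimpleGraph.le_egirth.mp le_rfl c w hw
    have h2 : G.egirth ≠ ⊤ := fun h => hnac (SimpleGraph.egirth_eq_top.mp h)
    have h3 : ((G.girth : ℕ) : ℕ∞) = G.egirth := ENat.coe_toNat h2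
    rw [hg] at h3
    rw [← h3] at h1
    exact_mod_cast h1
  obtain ⟨a, w0, hw0, -⟩ := SimpleGraph.exists_girth_eq_length.mpr hnac
  haveI : Nonempty V := ⟨a⟩
  -- real-number abbreviations
  have hgR : (7 : ℝ) ≤ (g : ℝ) := by exact_mod_cast h6
  -- low-degree cases
  by_cases hδ3 : 3 ≤ δ
  swap
  · -- δ ≤ 2 : hineq or hcon is violated
    interval_cases δ
    · have : (0 : ℝ) ≤ (Z : ℝ) := Nat.cast_nonneg _
      push_cast at hcon
      nlinarith
    · push_cast at hcon
      nlinarith [Nat.cast_nonneg (α := ℝ) Z]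
    · push_cast at hineq
      norm_num at hineq
      have hpos : (0:ℝ) < (g:ℝ) + 1 := by linarith
      have hmul := mul_le_mul_of_nonneg_left hineq (le_of_lt hpos)
      rw [← mul_assoc, mul_inv_cancel₀ (ne_of_gt hpos), one_mul] at hmul
      nlinarith
  -- main case
  · set r := (g - 1) / 2 with hrdef
    have hr : 2 * r + 1 ≤ g := by omega
    have hr1 : 3 ≤ r := by omega
    have hdeg : ∀ u : V, δ ≤ G.degree u := fun u => G.minDegree_le_degree u
    set P := (δ - 1) ^ (r - 1) with hPdef
    have hδ1R : ((δ - 1 : ℕ) : ℝ) = (δ : ℝ) - 1 := by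
      push_cast [Nat.cast_sub (by omega : 1 ≤ δ)]
      ring
    have hPR : ((P : ℕ) : ℝ) = ((δ : ℝ) - 1) ^ (r - 1) := by
      rw [hPdef]
      push_cast [← hδ1R]
      ring
    -- rewrite hineq exponent
    have hexp : (g - 1) / 2 - 1 = r - 1 := by omega
    rw [hexp] at hineq
    set T : ℝ := (δ : ℝ) + ((δ : ℝ) - 2) * ((g : ℝ) - 3) with hTdef
    have hδR : (3 : ℝ) ≤ (δ : ℝ) := by exact_mod_cast hδ3
    have hT3 : (3 : ℝ) ≤ T := by
      rw [hTdef]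
      nlinarith [mul_nonneg (by linarith : (0:ℝ) ≤ (δ:ℝ) - 2) (by linarith : (0:ℝ) ≤ (g:ℝ) - 3)]
    have hineq' : T ≤ (P : ℝ) / (12 * ((g : ℝ) + 1)) := by
      rw [hTdef, hPR]; exact hineq
    have hPpos : (0 : ℝ) < (P : ℝ) := by
      rw [hPR]
      have : (0:ℝ) < (δ:ℝ) - 1 := by linarith
      positivity
    have hPT : T * (12 * ((g : ℝ) + 1)) ≤ (P : ℝ) := by
      rw [le_div_iff₀ (by nlinarith : (0:ℝ) < 12 * ((g:ℝ)+1))] at hineq'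
      exact hineq'
    -- z < T and z < P
    have hZT : (Z : ℝ) < T := hcon
    have hZP : Z < P := by
      have : (Z : ℝ) < (P : ℝ) := by nlinarith
      exact_mod_cast this
    -- n ≥ (δ-1)^r  via master with C = univ, D = ∅
    have hclosedU : ∀ u ∈ (Finset.univ : Finset V) \ ∅, G.neighborFinset u ⊆ Finset.univ :=
      fun u _ => Finset.subset_univ _
    have hmasterU := master_count hcyc hr hdeg (by omega) hδ3
      (Finset.univ : Finset V) ∅ (Finset.empty_subset _) hclosedU
    simp only [Finset.sdiff_empty, Finset.card_univ, Finset.card_empty, Nat.zero_mul,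
      zero_mul, add_zero] at hmasterU
    have hnpos : 0 < Fintype.card V := Fintype.card_pos
    have hP'n : (δ - 1) ^ r ≤ Fintype.card V :=
      Nat.le_of_mul_le_mul_left (by rw [mul_comm (Fintype.card V)] at hmasterU ⊢; exact hmasterU) hnpos
    have hPP' : P ≤ (δ - 1) ^ r := by
      rw [hPdef]
      exact Nat.pow_le_pow_right (by omega) (by omega)
    have hPn : P ≤ Fintype.card V := hPP'.trans hP'n
    -- get a minimum zero forcing set
    have hZmem : Z ∈ {k | ∃ S : Finset V, G.IsZeroForcingSet ↑S ∧ S.card = k} := by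
      rw [hZdef, SimpleGraph.zeroForcingNumber]
      apply Nat.sInf_mem
      exact ⟨Fintype.card V, Finset.univ, fun v => SimpleGraph.Forced.init (by simp), by simp⟩
    obtain ⟨B, hBzfs, hBcard⟩ := hZmem
    -- run the forcing process for P - Z steps
    obtain ⟨C, F, hBC, hFC, hCcard, hFcard, hCforced, hFclosed⟩ :=
      forcing_chain B hBzfs (P - Z) (by rw [hBcard]; omega)
    rw [hBcard] at hCcard
    have hCP : C.card = P := by omega
    set D := C \ F with hDdef
    have hDC : D ⊆ C := Finset.sdiff_subset
    have hCD : C \ D = F := Finset.sdiff_sdiff_eq_self hFC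
    have hclosedC : ∀ u ∈ C \ D, G.neighborFinset u ⊆ C := by
      rw [hCD]; exact hFclosed
    have hDcard : D.card = Z := by
      rw [hDdef, Finset.card_sdiff_of_subset hFC, hCP, hFcard]
      omega
    have hmaster := master_count hcyc hr hdeg (by omega) hδ3 C D hDC hclosedC
    rw [hCD, hCP, hFcard, hDcard] at hmaster
    -- divide by P
    have hPposN : 0 < P := by
      rw [hPdef]
      exact pow_pos (by omega) _
    have hδr : (δ - 1) ^ r = P * (δ - 1) := by
      rw [hPdef, ← pow_succ]
      congr 1
      omega
    have hkey : (P - Z) * (δ - 1) ≤ (P - Z) + Z * (r - 1) + Z * (Z - 1) := by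
      have h1 : (P - Z) * ((δ - 1) ^ r) = P * ((P - Z) * (δ - 1)) := by
        rw [hδr]; ring
      have h2 : (P - Z) * P + Z * ((r - 1) * P + (δ - 1) ^ (r - 1) * (Z - 1)) =
          P * ((P - Z) + Z * (r - 1) + Z * (Z - 1)) := by
        rw [← hPdef]; ring
      rw [h1, h2] at hmaster
      exact Nat.le_of_mul_le_mul_left hmaster hPposN
    -- final real-number contradiction
    have hcast : ((P : ℝ) - Z) * ((δ : ℝ) - 1) ≤ ((P : ℝ) - Z) + Z * r + Z * Z := by
      have hle : (P - Z) * (δ - 1) ≤ (P - Z) + Z * r + Z * Z := by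
        calc (P - Z) * (δ - 1) ≤ (P - Z) + Z * (r - 1) + Z * (Z - 1) := hkey
          _ ≤ (P - Z) + Z * r + Z * Z := by
              have : Z * (r - 1) ≤ Z * r := Nat.mul_le_mul_left _ (by omega)
              have : Z * (Z - 1) ≤ Z * Z := Nat.mul_le_mul_left _ (by omega)
              omega
      have h := (Nat.cast_le (α := ℝ)).mpr hle
      push_cast [Nat.cast_sub hZP.le, Nat.cast_sub (by omega : 1 ≤ δ)] at h
      linarith
    have hZ0 : (0:ℝ) ≤ (Z:ℝ) := Nat.cast_nonneg _
    have hrR : 2 * (r : ℝ) ≤ (g : ℝ) - 1 := by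
      have h2r : (2 * r : ℕ) ≤ g - 1 := by omega
      have h2 := (Nat.cast_le (α := ℝ)).mpr h2r
      push_cast [Nat.cast_sub (by omega : 1 ≤ g)] at h2
      linarith
    have hTg : T ≤ ((δ:ℝ) - 2) * (g:ℝ) := by
      rw [hTdef]
      nlinarith
    exact endgame hδR hgR hT3 hPT hZT hZ0 (Nat.cast_nonneg _) hrR hTg hcast

-- #print axioms zf_girth_lower_bound
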